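/- arXiv:1202.3274 — 4 statements merged into one kernel-verified Lean document; each statement's English description precedes it below -/
import Mathlib

section
/- Let E be a free Z_l-module of finite rank and F an automorphism of E such that F - 1 is injective with finite cokernel. Then for every k ≥ 1, the kernel of F - 1 acting on E/l^k E is isomorphic to the l^k-torsion subgroup of the cokernel of F - 1 acting on E. -/
/-- Let `E` be a free `ℤ_[l]`-module of finite rank and `F` an automorphism of `E` such that
`g = F - 1` is injective with finite cokernel.  Then for every `k ≥ 1`, the kernel of the map
induced by `g` on `E/l^k E` is isomorphic to the `l^k`-torsion subgroup of the cokernel of `g`. -/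
theorem stmt_0 (l : ℕ) [Fact l.Prime] (E : Type*) [AddCommGroup E] [Module ℤ_[l] E]
    [Module.Free ℤ_[l] E] [Module.Finite ℤ_[l] E]
    (F : E ≃ₗ[ℤ_[l]] E) (g : E →ₗ[ℤ_[l]] E) (hg : g = F.toLinearMap - LinearMap.id)
    (hinj : Function.Injective g) (hfin : Finite (E ⧸ LinearMap.range g))
    (k : ℕ) (hk : 1 ≤ k) :
    Nonempty
      ((LinearMap.ker
          (Submodule.mapQ
            (LinearMap.range ((l : ℤ_[l]) ^ k • (LinearMap.id : E →ₗ[ℤ_[l]] E)))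
            (LinearMap.range ((l : ℤ_[l]) ^ k • (LinearMap.id : E →ₗ[ℤ_[l]] E))) g
            (by rintro x ⟨y, rfl⟩; exact ⟨g y, by simp⟩))) ≃ₗ[ℤ_[l]]
        (LinearMap.ker
          ((l : ℤ_[l]) ^ k •
            (LinearMap.id : (E ⧸ LinearMap.range g) →ₗ[ℤ_[l]] (E ⧸ LinearMap.range g))))) := by
  classical
  set m : E →ₗ[ℤ_[l]] E := (l : ℤ_[l]) ^ k • (LinearMap.id : E →ₗ[ℤ_[l]] E) with hm_def
  have hl0 : ((l : ℤ_[l]) ^ k) ≠ 0 :=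
    pow_ne_zero k (by exact_mod_cast (Fact.out : l.Prime).ne_zero)
  have hm : Function.Injective m := by
    intro a b hab
    exact smul_right_injective E hl0 hab
  set N : Submodule ℤ_[l] E := LinearMap.range m with hN_def
  set D : Submodule ℤ_[l] E := Submodule.comap g N with hD_def
  -- the restriction of g to D, landing in N
  set r : D →ₗ[ℤ_[l]] N := g.restrict (fun x hx => hx) with hr_def
  set e : E ≃ₗ[ℤ_[l]] N := LinearEquiv.ofInjective m hm with he_def
  have key : ∀ x : D, m (e.symm (r x)) = g x := by
    intro x
    have h1 : e (e.symm (r x)) = r x := e.apply_symm_apply (r x)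
    have h2 : (e (e.symm (r x)) : E) = m (e.symm (r x)) :=
      LinearEquiv.ofInjective_apply m (e.symm (r x))
    rw [h1] at h2
    exact h2.symm
  set φ : D →ₗ[ℤ_[l]] E ⧸ N := N.mkQ.comp D.subtype with hφ_def
  set ψ : D →ₗ[ℤ_[l]] E ⧸ LinearMap.range g :=
    (LinearMap.range g).mkQ.comp (e.symm.toLinearMap.comp r) with hψ_def
  -- kernels agree
  have hker : LinearMap.ker φ = LinearMap.ker ψ := by
    ext x
    simp only [LinearMap.mem_ker, hφ_def, hψ_def, LinearMap.comp_apply,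
      LinearEquiv.coe_coe, Submodule.mkQ_apply, Submodule.Quotient.mk_eq_zero,
      Submodule.coe_subtype]
    constructor
    · rintro ⟨z, hz⟩
      refine ⟨z, ?_⟩
      apply hm
      rw [key x]
      have hcom : m (g z) = g (m z) := by
        simp only [hm_def, LinearMap.smul_apply, LinearMap.id_apply, map_smul]
      rw [hcom, hz]
    · rintro ⟨z, hz⟩
      refine ⟨z, hinj ?_⟩
      have : g (m z) = m (g z) := by
        simp only [hm_def, LinearMap.smul_apply, LinearMap.id_apply, map_smul]
      rw [this, hz, key x]
  -- range of ψ is the l^k-torsion of the cokernel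
  have hrange : LinearMap.range ψ =
      LinearMap.ker ((l : ℤ_[l]) ^ k •
        (LinearMap.id : (E ⧸ LinearMap.range g) →ₗ[ℤ_[l]] (E ⧸ LinearMap.range g))) := by
    apply le_antisymm
    · rintro _ ⟨x, rfl⟩
      simp only [LinearMap.mem_ker, LinearMap.smul_apply, LinearMap.id_apply, hψ_def,
        LinearMap.comp_apply, LinearEquiv.coe_coe, Submodule.mkQ_apply]
      rw [← Submodule.Quotient.mk_smul, Submodule.Quotient.mk_eq_zero]
      have : ((l : ℤ_[l]) ^ k) • (e.symm (r x) : E) = m (e.symm (r x)) := rfl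
      rw [this, key x]
      exact ⟨x, rfl⟩
    · intro c hc
      obtain ⟨y, rfl⟩ := Submodule.mkQ_surjective _ c
      simp only [LinearMap.mem_ker, LinearMap.smul_apply, LinearMap.id_apply,
        Submodule.mkQ_apply] at hc
      rw [← Submodule.Quotient.mk_smul, Submodule.Quotient.mk_eq_zero] at hc
      obtain ⟨x, hx⟩ := hc
      have hxD : x ∈ D := by
        refine ⟨y, ?_⟩
        simpa only [hm_def, LinearMap.smul_apply, LinearMap.id_apply] using hx.symm
      refine ⟨⟨x, hxD⟩, ?_⟩
      have hy : e.symm (r ⟨x, hxD⟩) = y := by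
        apply hm
        rw [key ⟨x, hxD⟩]
        simpa only [hm_def, LinearMap.smul_apply, LinearMap.id_apply] using hx
      show (LinearMap.range g).mkQ (e.symm (r ⟨x, hxD⟩)) = _
      rw [hy]
  -- the kernel of the induced map is the range of φ
  have hkermapQ : LinearMap.ker
      (Submodule.mapQ N N g (by
        rintro x ⟨y, rfl⟩
        exact ⟨g y, by
          simp only [hm_def, LinearMap.smul_apply, LinearMap.id_apply, map_smul]⟩)) =
      LinearMap.range φ := by
    rw [Submodule.mapQ, Submodule.ker_liftQ, LinearMap.ker_comp, Submodule.ker_mkQ,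
      hφ_def, LinearMap.range_comp, Submodule.range_subtype]
  refine ⟨?_⟩
  exact (LinearEquiv.ofEq _ _ hkermapQ) ≪≫ₗ (LinearMap.quotKerEquivRange φ).symm ≪≫ₗ
    (Submodule.quotEquivOfEq _ _ hker) ≪≫ₗ (LinearMap.quotKerEquivRange ψ) ≪≫ₗ
    (LinearEquiv.ofEq _ _ hrange)
end

section
/- For every integer n ≥ 1, the scheme of primitive n-th roots of unity over Z, namely μ_n minus the union of μ_d for proper divisors d of n, is isomorphic to Spec Z[1/n][T]/(Φ_n(T)), where Φ_n is the n-th cyclotomic polynomial; in particular it lies entirely over Spec Z[1/n] and is isomorphic to Spec Z[1/n, ζ_n]. -/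
/-!
Let `A = ℤ[X]/(X^n - 1)`, `C = ℤ[X]/(Φ_n)` and `f = ∏_{d ∣ n, d < n} (X^d - 1)`. Since `X^n - 1`
divides `Φ_n f`, the kernel of `A → C` is killed by `f`, so `A_f = C_f`; it remains to see that
`C_f = C_n`, i.e. that `n` and `f` have the same radical in `C`.

If `n` is inverted, differentiating `X^n - 1 = (X^d - 1) Φ_n q` at a root of `Φ_n` shows that every
factor `X^d - 1` of `f` becomes a unit. Conversely, modulo a prime containing `n`, of residue
characteristic `p ∣ n`, the image of `X` is an `n`-th root of unity; as Frobenius is injective it is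
even an `m`-th root of unity, `m` the prime-to-`p` part of `n`, so the factor `X^m - 1` of `f`
vanishes. Hence `f` lies in the radical of `(n)`.
-/

open Polynomial

attribute [local instance] Polynomial.algebra in
theorem Polynomial.isLocalization_away_C {R S : Type*} [CommSemiring R] [CommSemiring S]
    [Algebra R S] (r : R) [IsLocalization.Away r S] : IsLocalization.Away (C r) S[X] := by
  simpa only [Submonoid.map_powers] using Polynomial.isLocalization (Submonoid.powers r) S

namespace IsLocalization.Away

theorem of_dvd_pow {R S : Type*} [CommSemiring R] [CommSemiring S] [Algebra R S] {x y : R}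
    [IsLocalization.Away x S] (hy : IsUnit (algebraMap R S y)) {k : ℕ} (hxy : x ∣ y ^ k) :
    IsLocalization.Away y S := by
  obtain ⟨c, hc⟩ := hxy
  refine .mk y hy (fun s ↦ ?_) (fun a b hab ↦ ?_)
  · obtain ⟨m, a, ha⟩ := surj x s
    refine ⟨k * m, a * c ^ m, ?_⟩
    rw [pow_mul, ← map_pow, hc, map_mul, mul_pow, ← mul_assoc, ha, map_mul, map_pow]
  · obtain ⟨m, hm⟩ := exists_of_eq x hab
    refine ⟨k * m, ?_⟩
    rw [pow_mul, hc, mul_pow, mul_right_comm, hm, mul_right_comm]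

theorem quotient {P Q : Type*} [CommRing P] [CommRing Q] [Algebra P Q] (s : P)
    [IsLocalization.Away s Q] {I : Ideal P} {J : Ideal Q} (hIJ : I.map (algebraMap P Q) = J)
    [Algebra (P ⧸ I) (Q ⧸ J)] [IsScalarTower P (P ⧸ I) (Q ⧸ J)] :
    IsLocalization.Away (Ideal.Quotient.mk I s) (Q ⧸ J) := by
  have hmk (p : P) : algebraMap (P ⧸ I) (Q ⧸ J) (Ideal.Quotient.mk I p) =
      Ideal.Quotient.mk J (algebraMap P Q p) := by
    rw [← Ideal.Quotient.algebraMap_eq, ← IsScalarTower.algebraMap_apply,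
      IsScalarTower.algebraMap_apply P Q (Q ⧸ J), Ideal.Quotient.algebraMap_eq]
  refine .mk _ ?_ (fun z ↦ ?_) (fun a b hab ↦ ?_)
  · rw [hmk]
    exact (algebraMap_isUnit s).map _
  · obtain ⟨q, rfl⟩ := Ideal.Quotient.mk_surjective z
    obtain ⟨m, a, ha⟩ := surj s q
    exact ⟨m, Ideal.Quotient.mk I a, by rw [hmk, hmk, ← map_pow, ← map_mul, ha]⟩
  · obtain ⟨a, rfl⟩ := Ideal.Quotient.mk_surjective a
    obtain ⟨b, rfl⟩ := Ideal.Quotient.mk_surjective b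
    rw [hmk, hmk, Ideal.Quotient.eq, ← map_sub, ← hIJ,
      IsLocalization.mem_map_algebraMap_iff (Submonoid.powers s)] at hab
    obtain ⟨⟨⟨i, hi⟩, ⟨-, j, rfl⟩⟩, hij⟩ := hab
    obtain ⟨l, hl⟩ := exists_of_eq (S := Q) s
      (by rw [map_mul]; exact hij : algebraMap P Q ((a - b) * s ^ j) = algebraMap P Q i)
    refine ⟨l + j, ?_⟩
    rw [← map_pow, ← map_mul, ← map_mul, Ideal.Quotient.eq, ← mul_sub, pow_add, mul_assoc,
      mul_comm _ (a - b), hl]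
    exact I.mul_mem_left _ hi

theorem of_surjective_of_pow_mul_ker {R S T : Type*} [CommRing R] [CommRing S] [CommRing T]
    [Algebra R S] [Algebra S T] [Algebra R T] [IsScalarTower R S T]
    (hsurj : Function.Surjective (algebraMap R S)) (r : R) {m : ℕ}
    (hr : ∀ a ∈ RingHom.ker (algebraMap R S), r ^ m * a = 0)
    [IsLocalization.Away (algebraMap R S r) T] : IsLocalization.Away r T := by
  refine .mk _ ?_ (fun t ↦ ?_) (fun a b hab ↦ ?_)
  · rw [IsScalarTower.algebraMap_apply R S T]
    exact algebraMap_isUnit (algebraMap R S r)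
  · obtain ⟨k, s, hs⟩ := surj (algebraMap R S r) t
    obtain ⟨a, rfl⟩ := hsurj s
    exact ⟨k, a, by rwa [IsScalarTower.algebraMap_apply R S T,
      IsScalarTower.algebraMap_apply R S T]⟩
  · rw [IsScalarTower.algebraMap_apply R S T, IsScalarTower.algebraMap_apply R S T b] at hab
    obtain ⟨k, hk⟩ := exists_of_eq (S := T) (algebraMap R S r) hab
    refine ⟨m + k, sub_eq_zero.mp ?_⟩
    rw [← mul_sub, pow_add, mul_assoc]
    refine hr _ ?_
    rw [RingHom.mem_ker, map_mul, map_sub, mul_sub, map_pow, hk, sub_self]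

end IsLocalization.Away

theorem exists_mem_properDivisors_pow_eq_one {K : Type*} [CommRing K] [IsDomain K] {n : ℕ}
    (hn : n ≠ 0) (hnK : (n : K) = 0) {x : K} (hx : x ^ n = 1) :
    ∃ d ∈ n.properDivisors, x ^ d = 1 := by
  set p := ringChar K
  have hpn : p ∣ n := ringChar.dvd hnK
  have : NeZero p := ⟨fun hp ↦ hn (Nat.eq_zero_of_zero_dvd (hp ▸ hpn))⟩
  have hp : Fact p.Prime := CharP.char_is_prime_of_pos K p
  obtain ⟨e, m, hpm, rfl⟩ := Nat.exists_eq_pow_mul_and_not_dvd hn p hp.out.ne_one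
  have he : e ≠ 0 := by
    rintro rfl
    exact hpm (by simpa using hpn)
  refine ⟨m, Nat.mem_properDivisors.mpr ⟨Dvd.intro_left _ rfl, ?_⟩,
    (ExpChar.pow_prime_pow_mul_eq_one_iff p e m x).mp hx⟩
  have hm : 0 < m := Nat.pos_of_ne_zero (by rintro rfl; simp at hn)
  exact lt_mul_left hm (Nat.one_lt_pow he hp.out.one_lt)

section CyclotomicRoot

variable {S : Type*} [CommRing S] {n : ℕ} {x : S}

theorem pow_eq_one_of_aeval_cyclotomic_eq_zero (hx : aeval x (cyclotomic n ℤ) = 0) :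
    x ^ n = 1 := by
  obtain ⟨q, hq⟩ := cyclotomic.dvd_X_pow_sub_one n ℤ
  have := congrArg (aeval x) hq
  simp only [map_sub, map_pow, aeval_X, map_one, map_mul, hx, zero_mul] at this
  exact sub_eq_zero.mp this

theorem prod_pow_sub_one_mem_radical_span_natCast (hn : n ≠ 0)
    (hx : aeval x (cyclotomic n ℤ) = 0) :
    ∏ d ∈ n.properDivisors, (x ^ d - 1) ∈ (Ideal.span {(n : S)}).radical := by
  rw [Ideal.radical_eq_sInf, Submodule.mem_sInf]
  rintro J ⟨hnJ, hJ⟩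
  have hnK : ((n : ℕ) : S ⧸ J) = 0 := by
    rw [← map_natCast (Ideal.Quotient.mk J), Ideal.Quotient.eq_zero_iff_mem]
    exact hnJ (Ideal.mem_span_singleton_self _)
  obtain ⟨d, hd, hxd⟩ := exists_mem_properDivisors_pow_eq_one hn hnK (x := Ideal.Quotient.mk J x)
    (by rw [← map_pow, pow_eq_one_of_aeval_cyclotomic_eq_zero hx, map_one])
  refine Ideal.mem_of_dvd J (Finset.dvd_prod_of_mem _ hd) ?_
  rwa [← Ideal.Quotient.eq_zero_iff_mem, map_sub, map_pow, map_one, sub_eq_zero]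

theorem isUnit_aeval_of_mul_cyclotomic_dvd (hn : 0 < n) (hnS : IsUnit (n : S))
    (hx : aeval x (cyclotomic n ℤ) = 0) {p : ℤ[X]} (hp : p * cyclotomic n ℤ ∣ X ^ n - 1) :
    IsUnit (aeval x p) := by
  obtain ⟨q, hq⟩ := hp
  have hder : (n : S) * x ^ (n - 1) =
      aeval x p * (aeval x (derivative (cyclotomic n ℤ)) * aeval x q) := by
    have := congrArg (aeval x ∘ derivative) hq
    simp only [Function.comp_apply, derivative_X_pow, derivative_one, derivative_mul, map_sub,
      map_add, map_mul, map_pow, aeval_X, aeval_C, hx] at this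
    simpa [mul_assoc] using this
  have hxu : IsUnit (x ^ (n - 1)) :=
    (IsUnit.of_pow_eq_one (pow_eq_one_of_aeval_cyclotomic_eq_zero hx) hn.ne').pow _
  exact isUnit_of_mul_isUnit_left (hder ▸ hnS.mul hxu)

theorem isUnit_prod_pow_sub_one (hn : 0 < n) (hnS : IsUnit (n : S))
    (hx : aeval x (cyclotomic n ℤ) = 0) : IsUnit (∏ d ∈ n.properDivisors, (x ^ d - 1)) := by
  refine IsUnit.prod_iff.mpr fun d hd ↦ ?_
  simpa using isUnit_aeval_of_mul_cyclotomic_dvd hn hnS hx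
    (X_pow_sub_one_mul_cyclotomic_dvd_X_pow_sub_one_of_dvd ℤ hd)

variable (S n)

theorem aeval_mk_X_cyclotomic :
    aeval (Ideal.Quotient.mk (Ideal.span {cyclotomic n S}) X) (cyclotomic n ℤ) = 0 := by
  rw [← aeval_map_algebraMap S, map_cyclotomic, ← Ideal.Quotient.mkₐ_eq_mk S,
    aeval_algHom_apply, aeval_X_left_apply, Ideal.Quotient.mkₐ_eq_mk,
    Ideal.Quotient.eq_zero_iff_mem]
  exact Ideal.mem_span_singleton_self _

theorem isUnit_prod_mk_X_pow_sub_one (hn : 0 < n) (hnS : IsUnit (n : S)) :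
    IsUnit (∏ d ∈ n.properDivisors,
      (Ideal.Quotient.mk (Ideal.span {cyclotomic n S}) X ^ d - 1)) :=
  isUnit_prod_pow_sub_one hn (by simpa using hnS.map (algebraMap S (S[X] ⧸ Ideal.span {cyclotomic n S})))
    (aeval_mk_X_cyclotomic S n)

theorem exists_natCast_dvd_prod_mk_X_pow_sub_one_pow (hn : n ≠ 0) :
    ∃ k, (n : S[X] ⧸ Ideal.span {cyclotomic n S}) ∣
      (∏ d ∈ n.properDivisors, (Ideal.Quotient.mk (Ideal.span {cyclotomic n S}) X ^ d - 1)) ^ k := by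
  obtain ⟨k, hk⟩ := Ideal.mem_radical_iff.mp
    (prod_pow_sub_one_mem_radical_span_natCast hn (aeval_mk_X_cyclotomic S n))
  exact ⟨k, Ideal.mem_span_singleton.mp hk⟩

theorem X_pow_sub_one_dvd_cyclotomic_mul_prod (hn : 0 < n) :
    (X ^ n - 1 : S[X]) ∣ cyclotomic n S * ∏ d ∈ n.properDivisors, (X ^ d - 1) := by
  rw [← prod_cyclotomic_eq_X_pow_sub_one hn, ← Nat.cons_self_properDivisors hn.ne',
    Finset.prod_cons]
  exact mul_dvd_mul_left _
    (Finset.prod_dvd_prod_of_dvd _ _ fun d _ ↦ cyclotomic.dvd_X_pow_sub_one d S)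

theorem mk_prod_X_pow_sub_one_mul_eq_zero (hn : 0 < n) {u : S[X]}
    (hu : u ∈ Ideal.span {cyclotomic n S}) :
    Ideal.Quotient.mk (Ideal.span {(X ^ n - 1 : S[X])})
      ((∏ d ∈ n.properDivisors, (X ^ d - 1)) * u) = 0 := by
  obtain ⟨v, rfl⟩ := Ideal.mem_span_singleton.mp hu
  rw [Ideal.Quotient.eq_zero_iff_mem, Ideal.mem_span_singleton]
  exact (X_pow_sub_one_dvd_cyclotomic_mul_prod S n hn).trans ⟨v, by ring⟩

end CyclotomicRoot

theorem isLocalization_away_prod_X_pow_sub_one_cyclotomic (n : ℕ) (hn : 0 < n) (R : Type*)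
    [CommRing R] [IsLocalization.Away (n : ℤ) R]
    [Algebra (ℤ[X] ⧸ Ideal.span {cyclotomic n ℤ}) (R[X] ⧸ Ideal.span {cyclotomic n R})]
    (hmk : ∀ p : ℤ[X], algebraMap _ _ (Ideal.Quotient.mk (Ideal.span {cyclotomic n ℤ}) p) =
      Ideal.Quotient.mk (Ideal.span {cyclotomic n R}) (p.map (algebraMap ℤ R))) :
    IsLocalization.Away (Ideal.Quotient.mk (Ideal.span {cyclotomic n ℤ})
      (∏ d ∈ n.properDivisors, (X ^ d - 1))) (R[X] ⧸ Ideal.span {cyclotomic n R}) := by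
  let _ : Algebra ℤ[X] R[X] := Polynomial.algebra ℤ R
  have hΦ : (Ideal.span {cyclotomic n ℤ}).map (algebraMap ℤ[X] R[X]) =
      Ideal.span {cyclotomic n R} := by
    simp [Ideal.map_span, map_cyclotomic]
  have : IsScalarTower ℤ[X] (ℤ[X] ⧸ Ideal.span {cyclotomic n ℤ})
      (R[X] ⧸ Ideal.span {cyclotomic n R}) :=
    .of_algebraMap_eq (R := ℤ[X]) (S := ℤ[X] ⧸ Ideal.span {cyclotomic n ℤ})
      (A := R[X] ⧸ Ideal.span {cyclotomic n R}) fun p ↦ (hmk p).symm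
  have := Polynomial.isLocalization_away_C (S := R) (n : ℤ)
  have := IsLocalization.Away.quotient (Polynomial.C (n : ℤ)) hΦ
  have hnR : IsUnit (n : R) := by
    simpa using (IsLocalization.Away.algebraMap_isUnit (n : ℤ) : IsUnit (algebraMap ℤ R n))
  obtain ⟨k, hk⟩ := exists_natCast_dvd_prod_mk_X_pow_sub_one_pow ℤ n hn.ne'
  refine IsLocalization.Away.of_dvd_pow (x := Ideal.Quotient.mk _ (Polynomial.C (n : ℤ)))
    ?_ (k := k) (by simpa [map_prod] using hk)
  simpa [map_prod, hmk] using isUnit_prod_mk_X_pow_sub_one R n hn hnR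

/-- For `n ≥ 1`, the scheme `μ*_n` of primitive `n`-th roots of unity over `ℤ` — the open
subscheme of `μ_n = Spec ℤ[T]/(T^n - 1)` obtained by removing the closed subschemes `μ_d` for
the proper divisors `d` of `n`, i.e. the basic open locus where `∏_{d ∣ n, d ≠ n} (T^d - 1)` is
invertible — is isomorphic to `Spec ℤ[1/n][T]/(Φ_n(T)) = Spec ℤ[1/n, ζ_n]`; in particular it
lies entirely over `Spec ℤ[1/n]`.  On coordinate rings, with `R = ℤ[1/n]`, this is the
following ring isomorphism. -/
theorem stmt_7 (n : ℕ) (hn : 1 ≤ n) (R : Type) [CommRing R] [IsLocalization.Away (n : ℤ) R] :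
    Nonempty
      (Localization.Away
          ((Ideal.Quotient.mk (Ideal.span {(X : ℤ[X]) ^ n - 1}))
            (∏ d ∈ n.properDivisors, ((X : ℤ[X]) ^ d - 1))) ≃+*
        (R[X] ⧸ Ideal.span {cyclotomic n R})) := by
  set A := ℤ[X] ⧸ Ideal.span {(X : ℤ[X]) ^ n - 1}
  set C := ℤ[X] ⧸ Ideal.span {cyclotomic n ℤ}
  set B := R[X] ⧸ Ideal.span {cyclotomic n R}
  have hle : Ideal.span {(X : ℤ[X]) ^ n - 1} ≤ Ideal.span {cyclotomic n ℤ} :=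
    Ideal.span_singleton_le_span_singleton.mpr (cyclotomic.dvd_X_pow_sub_one n ℤ)
  let _ : Algebra C B := (Ideal.quotientMap _ (mapRingHom (algebraMap ℤ R))
    (Ideal.map_le_iff_le_comap.mp (by simp [Ideal.map_span, map_cyclotomic]))).toAlgebra
  let _ : Algebra A C := (Ideal.Quotient.factor hle).toAlgebra
  let _ : Algebra A B := ((algebraMap C B).comp (algebraMap A C)).toAlgebra
  have : IsScalarTower A C B := .of_algebraMap_eq fun _ ↦ rfl
  have : IsLocalization.Away (algebraMap A C (Ideal.Quotient.mk _ _)) B :=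
    isLocalization_away_prod_X_pow_sub_one_cyclotomic n hn R fun _ ↦ rfl
  have := IsLocalization.Away.of_surjective_of_pow_mul_ker (T := B)
    (Ideal.Quotient.factor_surjective hle) (m := 1) _ fun a ha ↦ by
      obtain ⟨u, rfl⟩ := Ideal.Quotient.mk_surjective a
      rw [pow_one, ← map_mul]
      exact mk_prod_X_pow_sub_one_mul_eq_zero ℤ n hn (Ideal.Quotient.eq_zero_iff_mem.mp ha)
  exact ⟨(IsLocalization.algEquiv (Submonoid.powers (Ideal.Quotient.mk _ (∏ d ∈ n.properDivisors, (X ^ d - 1)) : A)) _ B).toRingEquiv⟩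
end

section
/- If d and e are distinct positive divisors of n, then the cyclotomic polynomials Φ_d and Φ_e are coprime in the polynomial ring Z[1/n][T], i.e. they generate the unit ideal. -/
open Polynomial

theorem aux_cyclotomic_isCoprime {R : Type*} [CommRing R] {n d e : ℕ}
    (hu : IsUnit ((n : ℕ) : R)) (hd : d ∣ n) (he : e ∣ n) (hde : d ≠ e) :
    IsCoprime (cyclotomic d R) (cyclotomic e R) := by
  by_contra hcop
  have hne : Ideal.span ({cyclotomic d R, cyclotomic e R} : Set R[X]) ≠ ⊤ := by
    intro htop
    have h1 : (1 : R[X]) ∈ Ideal.span ({cyclotomic d R, cyclotomic e R} : Set R[X]) := by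
      rw [htop]; trivial
    obtain ⟨a, b, hab⟩ := Ideal.mem_span_pair.mp h1
    exact hcop ⟨a, b, hab⟩
  obtain ⟨m, hm, hle⟩ := Ideal.exists_le_maximal _ hne
  haveI := hm
  let φ : R[X] →+* R[X] ⧸ m := Ideal.Quotient.mk m
  let g : R →+* R[X] ⧸ m := φ.comp Polynomial.C
  obtain ⟨x, hx⟩ : ∃ x, φ X = x := ⟨_, rfl⟩
  have hφ : ∀ p : R[X], φ p = eval₂ g x p := by
    intro p
    have h : φ = eval₂RingHom g x := by
      apply Polynomial.ringHom_ext
      · intro r; simp [g]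
      · simpa using hx
    conv_lhs => rw [h]
    rfl
  have hnK : ((n : ℕ) : R[X] ⧸ m) ≠ 0 := by
    have h : ((n : ℕ) : R[X] ⧸ m) = g ((n : ℕ) : R) := by rw [map_natCast]
    rw [h]
    exact (hu.map g).ne_zero
  have hdK : NeZero ((d : ℕ) : R[X] ⧸ m) := by
    obtain ⟨c, rfl⟩ := hd
    refine ⟨fun h => hnK ?_⟩
    push_cast
    simp [h]
  have heK : NeZero ((e : ℕ) : R[X] ⧸ m) := by
    obtain ⟨c, rfl⟩ := he
    refine ⟨fun h => hnK ?_⟩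
    push_cast
    simp [h]
  have hroot : ∀ k : ℕ, cyclotomic k R ∈ m → IsRoot (cyclotomic k (R[X] ⧸ m)) x := by
    intro k hk
    have h0 : φ (cyclotomic k R) = 0 := Ideal.Quotient.eq_zero_iff_mem.mpr hk
    rw [hφ] at h0
    rw [IsRoot.def, ← map_cyclotomic k g, eval_map]
    exact h0
  have hd' : IsPrimitiveRoot x d :=
    (isRoot_cyclotomic_iff).mp (hroot d (hle (Ideal.subset_span (by simp))))
  have he' : IsPrimitiveRoot x e :=
    (isRoot_cyclotomic_iff).mp (hroot e (hle (Ideal.subset_span (by simp))))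
  exact hde (hd'.unique he')

/-- If `d` and `e` are distinct positive divisors of `n`, then the cyclotomic polynomials
`Φ_d` and `Φ_e` are coprime in `ℤ[1/n][T]`, i.e. they generate the unit ideal there. -/
theorem stmt_8 (n d e : ℕ) (hn : 0 < n) (hd : d ∣ n) (he : e ∣ n) (hde : d ≠ e)
    (hd0 : 0 < d) (he0 : 0 < e) :
    IsCoprime (Polynomial.cyclotomic d (Localization.Away (n : ℤ)))
      (Polynomial.cyclotomic e (Localization.Away (n : ℤ))) := by
  refine aux_cyclotomic_isCoprime (n := n) ?_ hd he hde
  have h := IsLocalization.Away.algebraMap_isUnit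
    (S := Localization.Away (n : ℤ)) (n : ℤ)
  rwa [map_natCast] at h
end

section
/- For Re(s) > 2, ζ(s-1)/ζ(s) = ∏_{n=1}^∞ ∏_{χ mod n} L'(χ, s), where the inner product runs over all Dirichlet characters χ modulo n, and L'(χ, s) = ∏_{p ∤ n} (1 - χ(p) p^{-s})^{-1} is the Dirichlet L-function of χ with Euler factors at primes dividing n removed (i.e. the L-function of the possibly imprimitive character mod n). -/
/-!
Taking logarithms of the Euler products, both sides become sums over prime powers `q = p ^ (k + 1)`
of `q ^ (-s) / (k + 1)` times a coefficient: `q - 1` on the left, and on the right, by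
orthogonality of Dirichlet characters, `∑_{N ∣ q - 1} φ(N)`. These agree because
`∑_{d ∣ m} φ(d) = m`, and for `Re s > 2` the double series over `(N, q)` converges absolutely,
which justifies exchanging the sums.
-/

open Complex

lemma hasSum_ite_dvd_totient_nsmul {M : Type*} [AddCommMonoid M] [TopologicalSpace M] {m : ℕ}
    (hm : m ≠ 0) (x : M) :
    HasSum (fun n : ℕ ↦ if n + 1 ∣ m then (n + 1).totient • x else 0) (m • x) := by
  have hsupp : ∀ n ∉ Finset.range m, (if n + 1 ∣ m then (n + 1).totient • x else 0) = 0 :=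
    fun n hn ↦ if_neg fun hdvd ↦ hn (Finset.mem_range.mpr (Nat.le_of_dvd (by omega) hdvd))
  have hsum : ∑ n ∈ Finset.range m, (if n + 1 ∣ m then (n + 1).totient • x else 0) = m • x := by
    rw [← Finset.sum_filter, ← Finset.sum_smul]
    congr 1
    conv_rhs => rw [← Nat.sum_totient m]
    rw [Nat.divisors, Finset.sum_filter, Finset.sum_filter, Finset.sum_Ico_eq_sum_range]
    simp [add_comm]
  exact hsum ▸ hasSum_sum_of_ne_finset_zero hsupp

lemma ZMod.natCast_eq_one_iff_dvd_sub_one {q N : ℕ} (hq : 1 ≤ q) :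
    (q : ZMod N) = 1 ↔ N ∣ q - 1 := by
  rw [← ZMod.natCast_eq_zero_iff, Nat.cast_sub hq, Nat.cast_one, sub_eq_zero]

namespace JoshiYogananda

def primePow (pk : Nat.Primes × ℕ) : ℕ := (pk.1 : ℕ) ^ (pk.2 + 1)

lemma primePow_injective : Function.Injective primePow := by
  rintro ⟨p, k⟩ ⟨q, l⟩ h
  obtain ⟨hpq, hkl⟩ := Nat.Prime.pow_inj p.2 q.2 h
  exact Prod.ext (Subtype.ext hpq) hkl

lemma one_lt_primePow (pk : Nat.Primes × ℕ) : 1 < primePow pk :=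
  Nat.one_lt_pow pk.2.succ_ne_zero pk.1.2.one_lt

lemma primePow_pos (pk : Nat.Primes × ℕ) : 0 < primePow pk :=
  zero_lt_one.trans (one_lt_primePow pk)

lemma summable_primePow_rpow_neg {r : ℝ} (hr : 1 < r) :
    Summable fun pk ↦ (primePow pk : ℝ) ^ (-r) :=
  (Real.summable_nat_rpow.mpr (neg_lt_neg hr)).comp_injective primePow_injective

noncomputable def eulerLogTerm (s : ℂ) (pk : Nat.Primes × ℕ) : ℂ :=
  (primePow pk : ℂ) ^ (-s) / (pk.2 + 1)

lemma norm_eulerLogTerm_le (s : ℂ) (pk : Nat.Primes × ℕ) :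
    ‖eulerLogTerm s pk‖ ≤ (primePow pk : ℝ) ^ (-s.re) := by
  rw [eulerLogTerm, norm_div, norm_natCast_cpow_of_pos (primePow_pos pk), neg_re]
  refine div_le_self (by positivity) ?_
  norm_cast
  simp

lemma summable_eulerLogTerm {s : ℂ} (hs : 1 < s.re) : Summable (eulerLogTerm s) :=
  (summable_primePow_rpow_neg hs).of_norm_bounded (norm_eulerLogTerm_le s)

lemma eulerLogTerm_sub_one (s : ℂ) (pk : Nat.Primes × ℕ) :
    eulerLogTerm (s - 1) pk = primePow pk * eulerLogTerm s pk := by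
  have hQ : (primePow pk : ℂ) ≠ 0 := by exact_mod_cast (primePow_pos pk).ne'
  rw [eulerLogTerm, eulerLogTerm, neg_sub', sub_neg_eq_add, add_comm, cpow_add _ _ hQ, cpow_one,
    mul_div_assoc]

lemma summable_pow_mul_eulerLogTerm {s : ℂ} (hs : 1 < s.re) {c : Nat.Primes → ℂ}
    (hc : ∀ p, ‖c p‖ ≤ 1) : Summable fun pk ↦ c pk.1 ^ (pk.2 + 1) * eulerLogTerm s pk := by
  refine (summable_eulerLogTerm hs).norm.of_norm_bounded fun pk ↦ ?_
  rw [norm_mul, norm_pow]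
  exact mul_le_of_le_one_left (norm_nonneg _) (pow_le_one₀ (norm_nonneg _) (hc _))

lemma tsum_neg_log_one_sub_eq_tsum_eulerLogTerm {s : ℂ} (hs : 1 < s.re) {c : Nat.Primes → ℂ}
    (hc : ∀ p, ‖c p‖ ≤ 1) :
    ∑' p : Nat.Primes, -log (1 - c p * (p : ℂ) ^ (-s)) =
      ∑' pk, c pk.1 ^ (pk.2 + 1) * eulerLogTerm s pk := by
  rw [(summable_pow_mul_eulerLogTerm hs hc).tsum_prod]
  refine tsum_congr fun p ↦ ?_
  have hz : ‖c p * (p : ℂ) ^ (-s)‖ < 1 := by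
    rw [norm_mul]
    exact (mul_le_of_le_one_left (norm_nonneg _) (hc p)).trans_lt
      ((norm_prime_cpow_le_one_half p hs).trans_lt (by norm_num))
  refine ((hasSum_taylorSeries_neg_log' hz).congr_fun fun k ↦ ?_).tsum_eq.symm
  dsimp only
  rw [eulerLogTerm, primePow, mul_pow, ← cpow_nat_mul, Nat.cast_pow, ← natCast_cpow_natCast_mul,
    mul_div_assoc]

lemma riemannZeta_eq_exp_tsum_eulerLogTerm {s : ℂ} (hs : 1 < s.re) :
    riemannZeta s = exp (∑' pk, eulerLogTerm s pk) := by
  rw [← riemannZeta_eulerProduct_exp_log hs]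
  congr 1
  simpa using tsum_neg_log_one_sub_eq_tsum_eulerLogTerm hs (c := 1) (by simp)

noncomputable def totientTerm (s : ℂ) (n : ℕ) (pk : Nat.Primes × ℕ) : ℂ :=
  if n + 1 ∣ primePow pk - 1 then (n + 1).totient • eulerLogTerm s pk else 0

lemma hasSum_totientTerm (s : ℂ) (pk : Nat.Primes × ℕ) :
    HasSum (fun n ↦ totientTerm s n pk) (eulerLogTerm (s - 1) pk - eulerLogTerm s pk) := by
  rw [eulerLogTerm_sub_one, ← sub_one_mul, ← Nat.cast_pred (primePow_pos pk), ← nsmul_eq_mul]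
  exact hasSum_ite_dvd_totient_nsmul (Nat.sub_ne_zero_of_lt (one_lt_primePow pk)) _

lemma summable_totientTerm {s : ℂ} (hs : 2 < s.re) :
    Summable (Function.uncurry (totientTerm s)) := by
  set bound : (Nat.Primes × ℕ) × ℕ → ℝ := fun x ↦
    if x.2 + 1 ∣ primePow x.1 - 1 then (x.2 + 1).totient • (primePow x.1 : ℝ) ^ (-s.re) else 0
  have hbound : Summable bound := by
    have hfiber (pk : Nat.Primes × ℕ) := hasSum_ite_dvd_totient_nsmul
      (Nat.sub_ne_zero_of_lt (one_lt_primePow pk)) ((primePow pk : ℝ) ^ (-s.re))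
    refine (summable_prod_of_nonneg fun x ↦ by positivity).mpr
      ⟨fun pk ↦ (hfiber pk).summable, ?_⟩
    refine (summable_primePow_rpow_neg (r := s.re - 1) (by linarith)).of_nonneg_of_le
      (fun pk ↦ tsum_nonneg fun n ↦ by positivity) fun pk ↦ ?_
    rw [(hfiber pk).tsum_eq, nsmul_eq_mul, neg_sub, sub_eq_add_neg,
      Real.rpow_add (by exact_mod_cast primePow_pos pk), Real.rpow_one]
    gcongr
    exact_mod_cast Nat.sub_le _ _
  refine hbound.prod_symm.of_norm_bounded fun x ↦ ?_
  simp only [Function.uncurry, totientTerm, bound, Prod.fst_swap, Prod.snd_swap]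
  split_ifs
  · rw [nsmul_eq_mul, nsmul_eq_mul, norm_mul, Complex.norm_natCast]
    gcongr
    exact norm_eulerLogTerm_le s x.2
  · simp

lemma sum_characters_pow_mul_eulerLogTerm (s : ℂ) (n : ℕ) (pk : Nat.Primes × ℕ) :
    ∑ χ : DirichletCharacter ℂ (n + 1), χ (pk.1 : ℕ) ^ (pk.2 + 1) * eulerLogTerm s pk =
      totientTerm s n pk := by
  simp_rw [← map_pow, ← Nat.cast_pow, ← Finset.sum_mul]
  rw [show (pk.1 : ℕ) ^ (pk.2 + 1) = primePow pk from rfl, DirichletCharacter.sum_characters_eq]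
  simp only [ZMod.natCast_eq_one_iff_dvd_sub_one (primePow_pos pk), totientTerm, nsmul_eq_mul]
  split_ifs <;> simp

lemma prod_eulerProduct_eq_exp_tsum_totientTerm {s : ℂ} (hs : 1 < s.re) (n : ℕ) :
    ∏ χ : DirichletCharacter ℂ (n + 1), ∏' p : Nat.Primes, (1 - χ p * (p : ℂ) ^ (-s))⁻¹ =
      exp (∑' pk, totientTerm s n pk) := by
  have hχ (χ : DirichletCharacter ℂ (n + 1)) : ∀ p : Nat.Primes, ‖χ p‖ ≤ 1 :=
    fun p ↦ χ.norm_le_one _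
  simp_rw [DirichletCharacter.LSeries_eulerProduct_tprod _ hs,
    ← DirichletCharacter.LSeries_eulerProduct_exp_log _ hs, ← exp_sum,
    tsum_neg_log_one_sub_eq_tsum_eulerLogTerm hs (hχ _)]
  rw [← Summable.tsum_finsetSum fun χ _ ↦ summable_pow_mul_eulerLogTerm hs (hχ χ)]
  simp_rw [sum_characters_pow_mul_eulerLogTerm]

end JoshiYogananda

open JoshiYogananda in
-- `χ p = 0` for `p ∣ n + 1`, so the inner product is the `L`-function of `χ` with the Euler
-- factors at the primes dividing the modulus removed.
/-- For `Re s > 2`, `ζ(s-1)/ζ(s) = ∏_{n ≥ 1} ∏_{χ mod n} L'(χ, s)`, where the inner (finite)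
product runs over all Dirichlet characters `χ` modulo `n` and
`L'(χ, s) = ∏_p (1 - χ(p) p^{-s})⁻¹` is the Dirichlet `L`-function of the (possibly
imprimitive) character `χ` mod `n`; note `χ(p) = 0` for `p ∣ n`, so the Euler factors at
primes dividing `n` are automatically removed. -/
theorem stmt_12 (s : ℂ) (hs : 2 < s.re) :
    riemannZeta (s - 1) / riemannZeta s =
      ∏' n : ℕ,
        ∏ χ : DirichletCharacter ℂ (n + 1),
          ∏' p : Nat.Primes, (1 - χ ((p : ℕ) : ZMod (n + 1)) * ((p : ℕ) : ℂ) ^ (-s))⁻¹ := by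
  have hs₁ : 1 < s.re := by linarith
  have hs₂ : 1 < (s - 1).re := by rw [sub_re, one_re]; linarith
  have hsum := summable_totientTerm hs
  calc riemannZeta (s - 1) / riemannZeta s
      = exp (∑' pk, (eulerLogTerm (s - 1) pk - eulerLogTerm s pk)) := by
        rw [riemannZeta_eq_exp_tsum_eulerLogTerm hs₁, riemannZeta_eq_exp_tsum_eulerLogTerm hs₂,
          ← exp_sub, Summable.tsum_sub (summable_eulerLogTerm hs₂) (summable_eulerLogTerm hs₁)]
    _ = exp (∑' n, ∑' pk, totientTerm s n pk) := by
        rw [← hsum.tsum_comm]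
        exact congrArg exp (tsum_congr fun pk ↦ (hasSum_totientTerm s pk).tsum_eq.symm)
    _ = ∏' n, exp (∑' pk, totientTerm s n pk) := hsum.prod.hasSum.cexp.tprod_eq.symm
    _ = _ := tprod_congr fun n ↦ (prod_eulerProduct_eq_exp_tsum_totientTerm hs₁ n).symm
end
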